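/- arXiv:1911.12274 — 2 statements merged into one kernel-verified Lean document; each statement's English description precedes it below -/
import Mathlib

section
/- For a polynomial p = Σᵢ cᵢxⁱ over a hyperfield H and an element a ∈ H, the following are equivalent: (1) 0 ∈ ⊞ᵢ cᵢaⁱ; (2) there exist d₀, …, d_{n−1} ∈ H with c₀ = −a·d₀, cᵢ ∈ (−a·dᵢ) ⊞ d_{i−1} for 1 ≤ i ≤ n−1, and cₙ = d_{n−1} (i.e. p ∈ (x − a)·q where q = Σ dᵢxⁱ). -/
/-- A hyperring: a commutative monoid-with-zero together with a multivalued
addition satisfying commutativity, associativity, `0 ⊞ a = {a}`, unique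
hyperinverses, distributivity and reversibility. -/
structure Hyperring (H : Type) where
  mul : H → H → H
  one : H
  zero : H
  neg : H → H
  add : H → H → Set H
  add_nonempty : ∀ a b, (add a b).Nonempty
  mul_assoc : ∀ a b c, mul (mul a b) c = mul a (mul b c)
  mul_comm : ∀ a b, mul a b = mul b a
  one_mul : ∀ a, mul one a = a
  zero_mul : ∀ a, mul zero a = zero
  add_comm : ∀ a b, add a b = add b a
  add_assoc : ∀ a b c, (⋃ d ∈ add b c, add a d) = ⋃ d ∈ add a b, add d c
  zero_add : ∀ a, add zero a = {a}
  neg_spec : ∀ a, zero ∈ add a (neg a)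
  neg_unique : ∀ a b, zero ∈ add a b → b = neg a
  distrib : ∀ a b c, (mul a) '' (add b c) = add (mul a b) (mul a c)
  reverse : ∀ a b c, a ∈ add b c ↔ neg b ∈ add a c

/-- Iterated hypersum of a list of elements of a hyperring. -/
def hsum {H : Type} (R : Hyperring H) : List H → Set H
  | [] => {R.zero}
  | a :: l => ⋃ b ∈ hsum R l, R.add a b

/-- A hyperfield: a hyperring where `0 ≠ 1` and nonzero elements are invertible. -/
structure Hyperfield (H : Type) extends Hyperring H where
  zero_ne_one : zero ≠ one
  inv : H → H
  mul_inv : ∀ a, a ≠ zero → mul a (inv a) = one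

/-- Iterated powers in a hyperring. -/
def hpow {H : Type} (R : Hyperring H) (a : H) : ℕ → H
  | 0 => R.one
  | n + 1 => R.mul a (hpow R a n)

/-! Writing the hypersum from the top, `0 ∈ ⊞ᵢ cᵢaⁱ` says exactly that there is a chain of
partial sums `eᵢ` with `0 ∈ c₀ ⊞ e₀`, `eᵢ ∈ cᵢ₊₁aⁱ⁺¹ ⊞ eᵢ₊₁` and `eₙ₋₁ = cₙaⁿ`. For `a ≠ 0` the
substitution `eᵢ = dᵢaⁱ⁺¹` is a bijection, and after cancelling `aⁱ⁺¹` the chain conditions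
become the coefficient conditions of `p ∈ (x - a)·q`. For `a = 0` both sides say `c₀ = 0`. -/

namespace Hyperring

variable {H : Type} (R : Hyperring H)

theorem mul_one (a : H) : R.mul a R.one = a := by rw [R.mul_comm, R.one_mul]

theorem mul_zero (a : H) : R.mul a R.zero = R.zero := by rw [R.mul_comm, R.zero_mul]

theorem add_zero (a : H) : R.add a R.zero = {a} := by rw [R.add_comm, R.zero_add]

theorem mul_mem_add_mul {x y z : H} (h : x ∈ R.add y z) (w : H) :
    R.mul x w ∈ R.add (R.mul y w) (R.mul z w) := by
  rw [R.mul_comm x, R.mul_comm y, R.mul_comm z, ← R.distrib]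
  exact ⟨x, h, rfl⟩

theorem neg_mul (a b : H) : R.mul (R.neg a) b = R.neg (R.mul a b) := by
  refine R.neg_unique _ _ ?_
  rw [← R.zero_mul b]
  exact R.mul_mem_add_mul (R.neg_spec a) b

theorem zero_mem_add_iff (x y : H) : R.zero ∈ R.add x y ↔ x = R.neg y := by
  rw [R.add_comm]
  exact ⟨R.neg_unique y x, fun h => h ▸ R.neg_spec y⟩

-- Reversibility in the form `a ∈ b ⊞ c ↔ -b ∈ a ⊞ c`, taken at `a = b = 1`, `c = 0`, forces `-1 = 1`.
theorem neg_eq_self (a : H) : R.neg a = a := by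
  have neg_one : R.neg R.one = R.one := by
    simpa only [R.add_zero, Set.mem_singleton_iff, true_iff] using R.reverse R.one R.one R.zero
  rw [← R.one_mul a, ← R.neg_mul, neg_one]

theorem mem_neg_add_iff (x y z : H) : x ∈ R.add (R.neg y) z ↔ z ∈ R.add x y := by
  have swap : ∀ u v w : H, u ∈ R.add v w → v ∈ R.add u w := fun u v w h => by
    simpa only [R.neg_eq_self] using (R.reverse u v w).mp h
  rw [R.neg_eq_self, R.add_comm y]
  exact ⟨swap x z y, swap z x y⟩

theorem mem_hsum_cons_iff (t x : H) (l : List H) :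
    x ∈ hsum R (t :: l) ↔ ∃ y ∈ hsum R l, x ∈ R.add t y := by
  simp only [hsum, Set.mem_iUnion, exists_prop]

theorem hsum_eq_zero_of_forall_eq_zero {l : List H} (h : ∀ y ∈ l, y = R.zero) :
    hsum R l = {R.zero} := by
  induction l with
  | nil => rfl
  | cons t l ih =>
    rw [List.forall_mem_cons] at h
    rw [hsum, ih h.2, h.1]
    simp [R.zero_add]

theorem hsum_cons_of_forall_eq_zero (t : H) {l : List H} (h : ∀ y ∈ l, y = R.zero) :
    hsum R (t :: l) = {t} := by
  ext x
  simp [R.mem_hsum_cons_iff, R.hsum_eq_zero_of_forall_eq_zero h, R.add_zero]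

theorem mem_hsum_map_range_iff (m : ℕ) (f : ℕ → H) (x : H) :
    x ∈ hsum R ((List.range (m + 2)).map f) ↔
      ∃ e : ℕ → H, x ∈ R.add (f 0) (e 0) ∧
        (∀ i < m, e i ∈ R.add (f (i + 1)) (e (i + 1))) ∧ e m = f (m + 1) := by
  induction m generalizing f x with
  | zero =>
    rw [show List.range 2 = [0, 1] from rfl, List.map_cons, List.map_cons, List.map_nil,
      R.mem_hsum_cons_iff, R.hsum_cons_of_forall_eq_zero _ (List.forall_mem_nil _)]
    simp only [Set.mem_singleton_iff, exists_eq_left]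
    exact ⟨fun h => ⟨fun _ => f 1, h, fun _ h => absurd h (Nat.not_lt_zero _), rfl⟩,
      fun ⟨_, h, _, he⟩ => he ▸ h⟩
  | succ m ih =>
    rw [List.range_succ_eq_map, List.map_cons, List.map_map, R.mem_hsum_cons_iff]
    simp only [ih, Function.comp_apply]
    constructor
    · rintro ⟨y, ⟨e, hy, he, hm⟩, hx⟩
      refine ⟨fun | 0 => y | i + 1 => e i, hx, ?_, hm⟩
      rintro (_ | i) hi
      · exact hy
      · exact he i (by omega)
    · rintro ⟨e, hx, he, hm⟩
      exact ⟨e 0, ⟨fun i => e (i + 1), he 0 (by omega), fun i hi => he (i + 1) (by omega), hm⟩, hx⟩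

theorem zero_mem_hsum_eval_zero_iff (n : ℕ) (c : ℕ → H) :
    R.zero ∈ hsum R ((List.range (n + 1)).map fun i => R.mul (c i) (hpow R R.zero i)) ↔
      c 0 = R.zero := by
  rw [List.range_succ_eq_map, List.map_cons, R.hsum_cons_of_forall_eq_zero]
  · simp only [hpow, R.mul_one, Set.mem_singleton_iff, eq_comm]
  · simp [hpow, R.zero_mul, R.mul_zero]

end Hyperring

namespace Hyperfield

variable {H : Type} (F : Hyperfield H)

theorem mul_inv_cancel_right {z : H} (hz : z ≠ F.zero) (x : H) :
    F.mul (F.mul x z) (F.inv z) = x := by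
  rw [F.mul_assoc, F.mul_inv z hz, F.mul_one]

theorem inv_mul_cancel_right {z : H} (hz : z ≠ F.zero) (x : H) :
    F.mul (F.mul x (F.inv z)) z = x := by
  rw [F.mul_assoc, F.mul_comm (F.inv z), F.mul_inv z hz, F.mul_one]

theorem mul_right_cancel_iff {z : H} (hz : z ≠ F.zero) {x y : H} :
    F.mul x z = F.mul y z ↔ x = y :=
  ⟨fun h => by rw [← F.mul_inv_cancel_right hz x, h, F.mul_inv_cancel_right hz], fun h => h ▸ rfl⟩

theorem hpow_ne_zero {a : H} (ha : a ≠ F.zero) (k : ℕ) : hpow F.toHyperring a k ≠ F.zero := by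
  induction k with
  | zero => exact F.zero_ne_one.symm
  | succ k ih =>
    intro h
    rw [hpow, ← F.zero_mul (hpow F.toHyperring a k), F.mul_right_cancel_iff ih] at h
    exact ha h

theorem mul_mem_add_mul_iff {z : H} (hz : z ≠ F.zero) {x y w : H} :
    F.mul x z ∈ F.add (F.mul y z) (F.mul w z) ↔ x ∈ F.add y w := by
  refine ⟨fun h => ?_, fun h => F.mul_mem_add_mul h z⟩
  simpa only [F.mul_inv_cancel_right hz] using F.mul_mem_add_mul h (F.inv z)

theorem mul_mem_mul_add_mul_mul_iff {z : H} (hz : z ≠ F.zero) (a c x y : H) :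
    F.mul x z ∈ F.add (F.mul c z) (F.mul y (F.mul a z)) ↔
      c ∈ F.add (F.mul (F.neg a) y) x := by
  rw [← F.mul_assoc, F.mul_mem_add_mul_iff hz, F.neg_mul, F.mem_neg_add_iff, F.mul_comm y]

theorem mul_right_surjective {u : ℕ → H} (hu : ∀ i, u i ≠ F.zero) :
    Function.Surjective fun (d : ℕ → H) i => F.mul (d i) (u i) :=
  fun e => ⟨fun i => F.mul (e i) (F.inv (u i)), funext fun i => F.inv_mul_cancel_right (hu i) _⟩

end Hyperfield

/-- Baker–Lorscheid Proposition/Definition: for `p = Σᵢ₌₀ⁿ cᵢxⁱ`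
over a hyperfield `H` and `a ∈ H`, one has `0 ∈ ⊞ᵢ cᵢaⁱ` iff there are
`d₀, …, d_{n−1}` with `c₀ = −a·d₀`, `cᵢ ∈ (−a·dᵢ) ⊞ d_{i−1}` for `0 < i < n`,
and `cₙ = d_{n−1}` (i.e. `p ∈ (x − a)·q` with `q = Σ dᵢxⁱ`). -/
theorem zero_mem_eval_iff_linear_factorization {H : Type} (F : Hyperfield H)
    (n : ℕ) (hn : 1 ≤ n) (c : ℕ → H) (a : H) :
    F.zero ∈ hsum F.toHyperring
        ((List.range (n + 1)).map fun i => F.mul (c i) (hpow F.toHyperring a i)) ↔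
      ∃ d : ℕ → H,
        c 0 = F.mul (F.neg a) (d 0) ∧
        (∀ i, 1 ≤ i → i ≤ n - 1 → c i ∈ F.add (F.mul (F.neg a) (d i)) (d (i - 1))) ∧
        c n = d (n - 1) := by
  obtain ⟨m, rfl⟩ : ∃ m, n = m + 1 := ⟨n - 1, by omega⟩
  simp only [Nat.add_sub_cancel]
  by_cases ha : a = F.zero
  · subst ha
    simp only [F.zero_mem_hsum_eval_zero_iff, F.neg_eq_self, F.zero_mul, F.zero_add,
      Set.mem_singleton_iff]
    refine ⟨fun h => ⟨fun i => c (i + 1), h, fun i h1 _ => ?_, rfl⟩, fun ⟨_, h, _⟩ => h⟩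
    show c i = c (i - 1 + 1)
    rw [Nat.sub_add_cancel h1]
  rw [F.mem_hsum_map_range_iff]
  refine (F.mul_right_surjective fun i => F.hpow_ne_zero ha (i + 1)).exists.trans
    (exists_congr fun d => and_congr ?_ (and_congr ⟨?_, ?_⟩ ?_))
  · simp only [hpow, F.mul_one]
    rw [F.zero_mem_add_iff, F.neg_mul, F.mul_comm (d 0)]
  · rintro h (_ | i) h1 _
    · omega
    · exact (F.mul_mem_mul_add_mul_mul_iff (F.hpow_ne_zero ha _) ..).mp (h i (by omega))
  · exact fun h i hi => (F.mul_mem_mul_add_mul_mul_iff (F.hpow_ne_zero ha _) ..).mpr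
      (h (i + 1) (by omega) (by omega))
  · exact eq_comm.trans (F.mul_right_cancel_iff (F.hpow_ne_zero ha _))
end

section
/- Let p = Σᵢ₌₀ⁿ cᵢxⁱ over the sign hyperfield S with c₀, cₙ ≠ 0, and suppose +1 is a root of p. Let r be the index of the first sign change of p (smallest r with c_r = −c_k where k is the smallest index with c_k ≠ 0, and all nonzero cᵢ with i < r equal to c_k). Define q = Σᵢ₌₀^{n−1} dᵢxⁱ by dᵢ = −c_k for i < r (with k minimal such that c_k ≠ 0) and dᵢ = c_m for i ≥ r where m is the smallest index > i with c_m ≠ 0. Then p ∈ (x − 1)·q and Δ(q) = Δ(p) − 1. -/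
/-- Hyperaddition of the sign hyperfield `S = {0, +1, −1}` (carrier `SignType`):
`0 ⊞ x = {x}`, `1 ⊞ 1 = {1}`, `(−1) ⊞ (−1) = {−1}`, `1 ⊞ (−1) = S`. -/
def SAdd : SignType → SignType → Set SignType
  | SignType.zero, x => {x}
  | x, SignType.zero => {x}
  | SignType.pos, SignType.pos => {1}
  | SignType.neg, SignType.neg => {-1}
  | SignType.pos, SignType.neg => Set.univ
  | SignType.neg, SignType.pos => Set.univ

/-- Iterated hypersums in the sign hyperfield. -/
def Shsum : List SignType → Set SignType
  | [] => {0}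
  | a :: l => ⋃ b ∈ Shsum l, SAdd a b

/-- Number of sign changes in a list of signs. -/
def countChanges : List SignType → ℕ
  | a :: b :: l => (if a ≠ b then 1 else 0) + countChanges (b :: l)
  | _ => 0

/-- `Δ(p)`: the number of sign changes in a coefficient list, ignoring zeros. -/
def signChanges (l : List SignType) : ℕ :=
  countChanges (l.filter fun s => decide (s ≠ 0))

/-!
Write `nextNonzero c i` for the first index after `i` with a nonzero coefficient, so that
`dᵢ = c (nextNonzero c i)` for `i ≥ r`. Then `dᵢ₋₁ = cᵢ` when `cᵢ ≠ 0` (also at `i = r`, where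
`dᵣ₋₁ = -c₀ = cᵣ`) and `dᵢ₋₁ = dᵢ` when `cᵢ = 0`, which gives `cᵢ ∈ -dᵢ ⊞ dᵢ₋₁`; below `r` both
neighbours are `-c₀`, and `c₀ ⊞ -c₀` is all of `S`. The sequence `i ↦ c (nextNonzero c i)` is the
nonzero subsequence of `c` with entries repeated, so it has the same sign changes. In front of it
`q` has only copies of `-c₀ = cᵣ`, whereas `p` has copies of `c₀` followed by `cᵣ`: that is the one
lost sign change.
-/

lemma SignType.ne_neg_self {a : SignType} (ha : a ≠ 0) : a ≠ -a := by
  cases a <;> simp_all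

lemma mem_sAdd_right (a : SignType) {b : SignType} (hb : b ≠ 0) : b ∈ SAdd a b := by
  cases a <;> cases b <;> simp_all [SAdd]

lemma zero_mem_sAdd_neg_self (a : SignType) : (0 : SignType) ∈ SAdd (-a) a := by
  cases a <;> simp [SAdd]

lemma sAdd_neg_eq_univ {a : SignType} (ha : a ≠ 0) : SAdd a (-a) = Set.univ := by
  cases a <;> simp_all [SAdd]

lemma countChanges_cons_cons_self (a : SignType) (l : List SignType) :
    countChanges (a :: a :: l) = countChanges (a :: l) := by
  simp [countChanges]

lemma countChanges_replicate_append (k : ℕ) (a : SignType) (l : List SignType) :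
    countChanges (List.replicate (k + 1) a ++ l) = countChanges (a :: l) := by
  induction k with
  | zero => rfl
  | succ k ih =>
    rw [List.replicate_succ, List.cons_append, ← ih, List.replicate_succ, List.cons_append,
      countChanges_cons_cons_self]

lemma List.range_eq_range'_append {r n : ℕ} (h : r ≤ n) :
    List.range n = List.range' 0 r ++ List.range' r (n - r) := by
  conv_lhs => rw [← Nat.add_sub_cancel' h]
  rw [List.range_eq_range', ← List.range'_append_1, Nat.zero_add]

/-- The index of the first nonzero coefficient after position `i` (junk value `0` if there is
none). -/
noncomputable def nextNonzero (c : ℕ → SignType) (i : ℕ) : ℕ :=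
  sInf {m | i < m ∧ c m ≠ 0}

section nextNonzero

variable {c : ℕ → SignType} {i : ℕ}

lemma nextNonzero_of_ne_zero (h : c (i + 1) ≠ 0) : nextNonzero c i = i + 1 :=
  IsLeast.csInf_eq ⟨⟨i.lt_succ_self, h⟩, fun _ hm => hm.1⟩

lemma nextNonzero_of_eq_zero (h : c (i + 1) = 0) : nextNonzero c i = nextNonzero c (i + 1) := by
  unfold nextNonzero
  congr 1
  ext m
  refine ⟨fun ⟨him, hm⟩ => ⟨?_, hm⟩, fun ⟨him, hm⟩ => ⟨by omega, hm⟩⟩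
  rcases (Nat.succ_le_of_lt him).eq_or_lt with rfl | h'
  · exact absurd h hm
  · exact h'

lemma coeff_nextNonzero_ne_zero {n : ℕ} (hi : i < n) (hn : c n ≠ 0) :
    c (nextNonzero c i) ≠ 0 :=
  (Nat.sInf_mem ⟨n, hi, hn⟩ : nextNonzero c i ∈ _).2

lemma countChanges_cons_map_nextNonzero (x : SignType) (a k : ℕ) (hk : c (a + k) ≠ 0) :
    countChanges (x :: (List.range' a k).map (fun j => c (nextNonzero c j))) =
      countChanges (x :: ((List.range' (a + 1) k).map c).filter fun s => decide (s ≠ 0)) := by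
  induction k generalizing a x with
  | zero => rfl
  | succ k ih =>
    simp only [List.range'_succ, List.map_cons, List.filter_cons]
    by_cases ha : c (a + 1) = 0
    · obtain ⟨k, rfl⟩ : ∃ k', k = k' + 1 :=
        Nat.exists_eq_succ_of_ne_zero (by rintro rfl; exact hk ha)
      have := ih x (a + 1) (by rwa [Nat.add_right_comm])
      simp only [List.range'_succ, List.map_cons] at this ⊢
      rw [nextNonzero_of_eq_zero ha, countChanges, countChanges_cons_cons_self, ← countChanges,
        this, if_neg (by simpa using ha)]
    · rw [nextNonzero_of_ne_zero ha, if_pos (by simpa using ha), countChanges, countChanges,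
        ih _ (a + 1) (by rwa [Nat.add_right_comm])]

end nextNonzero

section FirstSignChange

variable {c d : ℕ → SignType} {r : ℕ} (h0 : c 0 ≠ 0) (hr : c r = -(c 0))
  (hd_lt : ∀ i < r, d i = -(c 0)) (hd_ge : ∀ i, r ≤ i → d i = c (nextNonzero c i))
include h0 hr

lemma pos_of_coeff_eq_neg_coeff_zero : 0 < r :=
  Nat.pos_of_ne_zero fun h => SignType.ne_neg_self h0 (h ▸ hr)

lemma coeff_ne_zero_of_eq_neg_coeff_zero : c r ≠ 0 :=
  hr ▸ mt SignType.neg_eq_zero_iff.1 h0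

include hd_lt hd_ge

lemma coeff_mem_sAdd {i : ℕ} (hi : 0 < i) : c i ∈ SAdd (-(d i)) (d (i - 1)) := by
  obtain ⟨j, rfl⟩ : ∃ j, i = j + 1 := Nat.exists_eq_succ_of_ne_zero hi.ne'
  rw [Nat.add_sub_cancel]
  rcases lt_trichotomy (j + 1) r with hj | rfl | hj
  · rw [hd_lt _ hj, hd_lt _ (by omega), neg_neg, sAdd_neg_eq_univ h0]
    trivial
  · rw [hd_lt _ j.lt_succ_self, ← hr]
    exact mem_sAdd_right _ (coeff_ne_zero_of_eq_neg_coeff_zero h0 hr)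
  · rw [hd_ge _ hj.le, hd_ge j (by omega)]
    by_cases hc : c (j + 1) = 0
    · rw [hc, nextNonzero_of_eq_zero hc]
      exact zero_mem_sAdd_neg_self _
    · rw [nextNonzero_of_ne_zero hc]
      exact mem_sAdd_right _ hc

variable {n : ℕ} (hrn : r ≤ n) (hcn : c n ≠ 0)
include hrn hcn

lemma coeff_last_eq : c n = d (n - 1) := by
  have hr0 := pos_of_coeff_eq_neg_coeff_zero h0 hr
  rcases hrn.eq_or_lt with rfl | hrn
  · rw [hd_lt _ (by omega), hr]
  · obtain ⟨m, rfl⟩ : ∃ m, n = m + 1 := ⟨n - 1, by omega⟩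
    rw [Nat.add_sub_cancel, hd_ge m (by omega), nextNonzero_of_ne_zero hcn]

lemma signChanges_map_range_add_one (hfirst : ∀ i < r, c i = c 0 ∨ c i = 0) :
    signChanges ((List.range n).map d) + 1 = signChanges ((List.range (n + 1)).map c) := by
  have hcr := coeff_ne_zero_of_eq_neg_coeff_zero h0 hr
  obtain ⟨r, rfl⟩ : ∃ r', r = r' + 1 :=
    Nat.exists_eq_succ_of_ne_zero (pos_of_coeff_eq_neg_coeff_zero h0 hr).ne'
  set F := ((List.range' (r + 1 + 1) (n - (r + 1))).map c).filter fun s => decide (s ≠ 0)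
  have hq : signChanges ((List.range n).map d) = countChanges (c (r + 1) :: F) := by
    have hd_ne : ∀ i < n, d i ≠ 0 := fun i hi => by
      rcases lt_or_ge i (r + 1) with h | h
      · rw [hd_lt i h]; exact mt SignType.neg_eq_zero_iff.1 h0
      · rw [hd_ge i h]; exact coeff_nextNonzero_ne_zero hi hcn
    rw [signChanges, List.filter_eq_self.2 (by simpa using hd_ne), List.range_eq_range'_append hrn,
      List.map_append, List.map_congr_left (l := List.range' 0 _) (g := fun _ => -(c 0))
        (by simpa using hd_lt),
      List.map_congr_left (l := List.range' (r + 1) _) (g := fun j => c (nextNonzero c j))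
        (by simpa using fun i hi _ => hd_ge i hi),
      List.map_const', List.length_range', countChanges_replicate_append, ← hr,
      countChanges_cons_map_nextNonzero _ _ _ (by rwa [Nat.add_sub_cancel' hrn])]
  have hp : signChanges ((List.range (n + 1)).map c) = countChanges (c 0 :: c (r + 1) :: F) := by
    have hprefix := List.eq_replicate_of_mem (a := c 0)
      (l := ((List.range' 1 r).map c).filter fun s => decide (s ≠ 0)) (by
        simp only [List.mem_filter, List.mem_map, List.mem_range'_1]
        rintro b ⟨⟨i, hi, rfl⟩, hb⟩
        exact (hfirst i (by omega)).resolve_right (by simpa using hb))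
    rw [signChanges, List.range_eq_range'_append (by omega : r + 1 ≤ n + 1),
      show n + 1 - (r + 1) = n - (r + 1) + 1 by omega, List.range'_succ, List.range'_succ,
      List.map_append, List.map_cons, List.map_cons, List.filter_append, List.filter_cons_of_pos
      (by simpa using h0), List.filter_cons_of_pos (by simpa using hcr), hprefix,
      ← List.replicate_succ, countChanges_replicate_append]
  rw [hq, hp, countChanges, if_pos (hr ▸ SignType.ne_neg_self h0), Nat.add_comm]

end FirstSignChange

theorem descartes_factorization_step_general (n : ℕ) (c : ℕ → SignType)
    (h0 : c 0 ≠ 0) (hcn : c n ≠ 0)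
    -- `r` is the index of the first sign change:
    (r : ℕ) (hrn : r ≤ n) (hr : c r = -(c 0))
    (hfirst : ∀ i < r, c i = c 0 ∨ c i = 0)
    -- the definition of `q`:
    (d : ℕ → SignType)
    (hd : ∀ i, d i = if i < r then -(c 0) else c (sInf {m : ℕ | i < m ∧ c m ≠ 0})) :
    -- `p ∈ (x − 1)·q`:
    (c 0 = -(d 0) ∧
      (∀ i, 0 < i → i < n → c i ∈ SAdd (-(d i)) (d (i - 1))) ∧
      c n = d (n - 1)) ∧
    -- `Δ(q) = Δ(p) − 1`:
    signChanges ((List.range n).map d) + 1 =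
      signChanges ((List.range (n + 1)).map c) := by
  have hd_lt : ∀ i < r, d i = -(c 0) := fun i hi => by rw [hd, if_pos hi]
  have hd_ge : ∀ i, r ≤ i → d i = c (nextNonzero c i) := fun i hi => by
    rw [hd, if_neg hi.not_gt, nextNonzero]
  refine ⟨⟨?_, fun i hi _ => coeff_mem_sAdd h0 hr hd_lt hd_ge hi,
    coeff_last_eq h0 hr hd_lt hd_ge hrn hcn⟩,
    signChanges_map_range_add_one h0 hr hd_lt hd_ge hrn hcn hfirst⟩
  rw [hd_lt 0 (pos_of_coeff_eq_neg_coeff_zero h0 hr), neg_neg]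

/-- let `p = Σᵢ₌₀ⁿ cᵢxⁱ` over the sign hyperfield with
`c₀, cₙ ≠ 0` and `+1` a root of `p`.  Let `r` be the index of the first sign
change and define `q = Σ dᵢxⁱ` by `dᵢ = −c₀` for `i < r` and `dᵢ = c_m`
(`m` the least index `> i` with `c_m ≠ 0`) for `i ≥ r`.  Then `p ∈ (x − 1)·q`
and `Δ(q) = Δ(p) − 1`. -/
theorem descartes_factorization_step (n : ℕ) (hn : 0 < n) (c : ℕ → SignType)
    (h0 : c 0 ≠ 0) (hcn : c n ≠ 0)
    -- `+1` is a root of `p`: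
    (hroot : (0 : SignType) ∈ Shsum ((List.range (n + 1)).map fun i => c i * 1 ^ i))
    -- `r` is the index of the first sign change:
    (r : ℕ) (hrn : r ≤ n) (hr : c r = -(c 0))
    (hfirst : ∀ i < r, c i = c 0 ∨ c i = 0)
    -- the definition of `q`:
    (d : ℕ → SignType)
    (hd : ∀ i, d i = if i < r then -(c 0) else c (sInf {m : ℕ | i < m ∧ c m ≠ 0})) :
    -- `p ∈ (x − 1)·q`:
    (c 0 = -(d 0) ∧
      (∀ i, 0 < i → i < n → c i ∈ SAdd (-(d i)) (d (i - 1))) ∧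
      c n = d (n - 1)) ∧
    -- `Δ(q) = Δ(p) − 1`:
    signChanges ((List.range n).map d) + 1 =
      signChanges ((List.range (n + 1)).map c) :=
  descartes_factorization_step_general n c h0 hcn r hrn hr hfirst d hd
end
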